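/- Let M be an m×n matrix with entries in K such that every adjacent maximal minor of M vanishes (i.e., for each 1 ≤ c ≤ n−m+1 the determinant of the submatrix of M on columns c,…,c+m−1 is zero). Then there exists a prime sequence Γ = ([a_1,b_1],…,[a_k,b_k]) such that for every i the submatrix of M on the columns [a_i,b_i] ∩ [1,n] has rank at most m−1, and for every 1 ≤ i ≤ k−1 the submatrix of M on the columns [a_{i+1}, b_i] has rank at most b_i − a_{i+1}. -/

import Mathlib

open MvPolynomial
/-- A prime sequence for the parameters `m`, `n`: a list of integer intervals
`[a_1,b_1], …, [a_k,b_k]` (recorded as pairs) covering `[0, n+1]`, each of width at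
least `m` (i.e. containing more than `m` integers), with strictly increasing left and
right endpoints, consecutive intervals overlapping in at least `1` and at most `m - 1`
columns. -/
def IsPrimeSeq (m n : ℕ) (Γ : List (ℕ × ℕ)) : Prop :=
  ∃ h0 : 0 < Γ.length,
    (Γ[0]'h0).1 = 0 ∧
    (Γ[Γ.length - 1]'(by omega)).2 = n + 1 ∧
    (∀ i (hi : i < Γ.length), (Γ[i]'hi).1 + m ≤ (Γ[i]'hi).2) ∧
    ∀ i (hi : i + 1 < Γ.length),
      (Γ[i]'(by omega)).1 < (Γ[i + 1]'hi).1 ∧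
      (Γ[i]'(by omega)).2 < (Γ[i + 1]'hi).2 ∧
      (Γ[i + 1]'hi).1 ≤ (Γ[i]'(by omega)).2 ∧
      (Γ[i]'(by omega)).2 + 2 ≤ (Γ[i + 1]'hi).1 + m


/-- The submatrix of `M` on the (1-based) columns in the interval `[a, b]`
(implicitly intersected with `[1, n]`). -/
def colSubmatrix {K : Type*} [Field K] {m n : ℕ} (M : Matrix (Fin m) (Fin n) K)
    (a b : ℕ) : Matrix (Fin m) {j : Fin n // a ≤ (j : ℕ) + 1 ∧ (j : ℕ) + 1 ≤ b} K :=
  M.submatrix id fun j => (j : Fin n)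

/-! The prime sequence is built greedily. Each interval `[a, b]` is extended to the right as long
as its columns have rank at most `m - 1`; if `b < n`, column `b + 1` is then independent of the
columns `[a, b]`, and the next interval starts at the largest `a'` (with `b - a' ≤ m - 2`) for
which the columns `[a', b]` are dependent. Such an `a'` exists because the adjacent minor on
`[b + 2 - m, b + 1]` vanishes, and by maximality column `a'` lies in the span of the columns
`[a' + 1, b]`, so the vanishing adjacent minor on `[a' + 1, a' + m]` shows that `[a', a' + m]`
has rank at most `m - 1` again. Both steps are instances of submodularity of the rank of
column intervals. -/

open Module Submodule Matrix

theorem Matrix.rank_lt_card_of_det_eq_zero {K ι : Type*} [Field K] [Fintype ι] [DecidableEq ι]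
    {A : Matrix ι ι K} (h : A.det = 0) : A.rank < Fintype.card ι := by
  refine lt_of_le_of_ne A.rank_le_card_width fun hrank => ?_
  have hli : LinearIndependent K A.col := by
    rw [linearIndependent_iff_card_eq_finrank_span, Set.finrank, ← rank_eq_finrank_span_cols,
      hrank]
  rw [Matrix.linearIndependent_cols_iff_isUnit, Matrix.isUnit_iff_isUnit_det, h] at hli
  exact not_isUnit_zero hli

theorem finrank_span_image_union_add_inter_le {K ι V : Type*} [Field K] [AddCommGroup V]
    [Module K V] [FiniteDimensional K V] (v : ι → V) (s t : Set ι) :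
    finrank K (span K (v '' (s ∪ t))) + finrank K (span K (v '' (s ∩ t))) ≤
      finrank K (span K (v '' s)) + finrank K (span K (v '' t)) := by
  rw [Set.image_union, Submodule.span_union (R := K),
    ← finrank_sup_add_finrank_inf_eq (span K (v '' s))]
  gcongr
  exact Submodule.finrank_mono <| le_inf (span_mono <| Set.image_mono Set.inter_subset_left)
    (span_mono <| Set.image_mono Set.inter_subset_right)

def PrimeSeqAdjacent (m : ℕ) (p q : ℕ × ℕ) : Prop :=
  p.1 < q.1 ∧ p.2 < q.2 ∧ q.1 ≤ p.2 ∧ p.2 + 2 ≤ q.1 + m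

theorem isPrimeSeq_of_isChain {m n : ℕ} {Γ : List (ℕ × ℕ)}
    (hhead : Γ.head?.map Prod.fst = some 0) (hlast : Γ.getLast?.map Prod.snd = some (n + 1))
    (hwidth : ∀ p ∈ Γ, p.1 + m ≤ p.2) (hchain : Γ.IsChain (PrimeSeqAdjacent m)) :
    IsPrimeSeq m n Γ := by
  have hne : Γ ≠ [] := by rintro rfl; simp at hhead
  refine ⟨List.length_pos_of_ne_nil hne, ?_, ?_, fun i hi => hwidth _ (List.getElem_mem hi),
    hchain.getElem⟩
  · rw [List.head?_eq_getElem?, List.getElem?_eq_getElem (List.length_pos_of_ne_nil hne)] at hhead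
    simpa using hhead
  · rw [List.getLast?_eq_getElem?, List.getElem?_eq_getElem (by grind)] at hlast
    simpa using hlast

section colRank

variable {K : Type*} [Field K] {m n : ℕ} (M : Matrix (Fin m) (Fin n) K)

noncomputable def colRank (a b : ℕ) : ℕ := (colSubmatrix M a b).rank

def AdjacentMaxMinorsVanish : Prop :=
  ∀ (c : ℕ) (hc : c + m ≤ n),
    (Matrix.of fun i j : Fin m => M i (⟨c + j.1, by omega⟩ : Fin n)).det = 0

variable {M}

theorem colRank_eq_finrank_span (a b : ℕ) :
    colRank M a b =
      finrank K (span K (M.col '' {j : Fin n | a ≤ (j : ℕ) + 1 ∧ (j : ℕ) + 1 ≤ b})) := by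
  rw [colRank, rank_eq_finrank_span_cols, ← Subtype.range_coe_subtype, ← Set.range_comp]
  rfl

theorem colRank_congr {a b a' b' : ℕ}
    (h : ∀ j : Fin n,
      a ≤ (j : ℕ) + 1 ∧ (j : ℕ) + 1 ≤ b ↔ a' ≤ (j : ℕ) + 1 ∧ (j : ℕ) + 1 ≤ b') :
    colRank M a b = colRank M a' b' := by
  rw [colRank_eq_finrank_span, colRank_eq_finrank_span, Set.ext h]

theorem colRank_mono {a a' b b' : ℕ} (ha : a' ≤ a) (hb : b ≤ b') :
    colRank M a b ≤ colRank M a' b' := by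
  simp only [colRank_eq_finrank_span]
  exact Submodule.finrank_mono <| span_mono <|
    Set.image_mono fun j hj => ⟨ha.trans hj.1, hj.2.trans hb⟩

theorem colRank_le_card (a b : ℕ) : colRank M a b ≤ b + 1 - a := by
  refine (rank_le_card_width _).trans <| (Fintype.card_le_of_injective
    (fun j : {j : Fin n // a ≤ (j : ℕ) + 1 ∧ (j : ℕ) + 1 ≤ b} =>
      (⟨j.1 + 1 - a, by omega⟩ : Fin (b + 1 - a))) fun i j hij => ?_).trans_eq
    (Fintype.card_fin _)
  simp only [Fin.mk.injEq] at hij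
  ext
  omega

-- Submodularity, for `[a, b'] = [a, b] ∪ [a', b']` and `[a', b] = [a, b] ∩ [a', b']`.
theorem colRank_add_colRank_le {a a' b b' : ℕ} (ha : a ≤ a') (hab : a' ≤ b + 1)
    (hb : b ≤ b') :
    colRank M a b' + colRank M a' b ≤ colRank M a b + colRank M a' b' := by
  have hunion : {j : Fin n | a ≤ (j : ℕ) + 1 ∧ (j : ℕ) + 1 ≤ b'} =
      {j : Fin n | a ≤ (j : ℕ) + 1 ∧ (j : ℕ) + 1 ≤ b} ∪
        {j : Fin n | a' ≤ (j : ℕ) + 1 ∧ (j : ℕ) + 1 ≤ b'} := by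
    ext j; simp only [Set.mem_union, Set.mem_ofPred_eq]; omega
  have hinter : {j : Fin n | a' ≤ (j : ℕ) + 1 ∧ (j : ℕ) + 1 ≤ b} =
      {j : Fin n | a ≤ (j : ℕ) + 1 ∧ (j : ℕ) + 1 ≤ b} ∩
        {j : Fin n | a' ≤ (j : ℕ) + 1 ∧ (j : ℕ) + 1 ≤ b'} := by
    ext j; simp only [Set.mem_inter_iff, Set.mem_ofPred_eq]; omega
  rw [colRank_eq_finrank_span, colRank_eq_finrank_span, colRank_eq_finrank_span,
    colRank_eq_finrank_span, hunion, hinter]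
  exact finrank_span_image_union_add_inter_le _ _ _

theorem colRank_le_add {a b b' : ℕ} (hab : a ≤ b + 1) (hb : b ≤ b') :
    colRank M a b' ≤ colRank M a b + (b' - b) := by
  have := colRank_add_colRank_le (M := M) hab le_rfl hb
  have := colRank_le_card (M := M) (b + 1) b'
  omega

theorem AdjacentMaxMinorsVanish.colRank_le (hM : AdjacentMaxMinorsVanish M) {c : ℕ}
    (hc : c + m ≤ n) : colRank M (c + 1) (c + m) ≤ m - 1 := by
  let e : Fin m ≃ {j : Fin n // c + 1 ≤ (j : ℕ) + 1 ∧ (j : ℕ) + 1 ≤ c + m} :=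
    { toFun := fun j => ⟨⟨c + j, by omega⟩, by simp only; omega⟩
      invFun := fun j => ⟨j.1 - c, by omega⟩
      left_inv := fun j => by ext; simp
      right_inv := fun j => by ext; simp only; omega }
  have h := Matrix.rank_lt_card_of_det_eq_zero (hM c hc)
  rw [Fintype.card_fin] at h
  have : colRank M (c + 1) (c + m) =
      (Matrix.of fun i j : Fin m => M i (⟨c + j.1, by omega⟩ : Fin n)).rank :=
    (rank_submatrix (colSubmatrix M (c + 1) (c + m)) (Equiv.refl _) e).symm
  omega

theorem exists_next_interval_start (hm : 2 ≤ m) (hM : AdjacentMaxMinorsVanish M) {a b : ℕ}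
    (hab : a + m ≤ b) (hbn : b < n) (hb : colRank M a b ≤ m - 1)
    (hb' : m - 1 < colRank M a (b + 1)) :
    ∃ a', a < a' ∧ a' ≤ b ∧ b + 2 ≤ a' + m ∧ a' + m ≤ n + 1 ∧
      colRank M a' b ≤ b - a' ∧ colRank M a' (a' + m) ≤ m - 1 := by
  let Q a' := b + 2 ≤ a' + m ∧ colRank M a' b ≤ b - a'
  -- Column `b + 1` is independent of the columns `[a, b]`, but dependent on the `m - 1`
  -- columns before it.
  have hQ₀ : Q (b + 2 - m) := by
    have := colRank_add_colRank_le (M := M) (a := a) (a' := b + 2 - m) (by omega) (by omega)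
      (by omega : b ≤ b + 1)
    have := hM.colRank_le (c := b + 1 - m) (by omega)
    rw [show b + 1 - m + 1 = b + 2 - m by omega, show b + 1 - m + m = b + 1 by omega] at this
    exact ⟨by omega, by omega⟩
  set a' := Nat.findGreatest Q (min b (n + 1 - m))
  have hQ₀a' : b + 2 - m ≤ a' := Nat.le_findGreatest (by omega) hQ₀
  have ha'le : a' ≤ min b (n + 1 - m) := Nat.findGreatest_le _
  obtain ⟨ha'm, ha'b⟩ : Q a' := Nat.findGreatest_spec (m := b + 2 - m) (by omega) hQ₀
  refine ⟨a', by omega, by omega, ha'm, by omega, ha'b, ?_⟩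
  rcases Nat.lt_or_ge (a' + m) (n + 1) with hn | hn
  · -- By maximality, column `a'` lies in the span of the columns `[a' + 1, b]`.
    have hstep : colRank M a' b ≤ colRank M (a' + 1) b := by
      rcases Nat.lt_or_ge a' b with hlt | hge
      · have := Nat.findGreatest_is_greatest (by omega : a' < a' + 1) (by omega : a' + 1 ≤ _)
        simp only [Q, not_and, not_le] at this
        omega
      · omega
    have := colRank_add_colRank_le (M := M) (a := a') (a' := a' + 1) (b := b) (b' := a' + m)
      (by omega) (by omega) (by omega)
    have := hM.colRank_le (c := a') (by omega)
    omega
  · have := colRank_le_add (M := M) (a := a') (b := b) (b' := n) (by omega) (by omega)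
    rw [colRank_congr (a' := a') (b' := n) fun j => by have := j.2; omega]
    omega

theorem exists_primeSeq_tail (hm : 2 ≤ m) (hM : AdjacentMaxMinorsVanish M) {a : ℕ}
    (ha : a + m ≤ n + 1) (hstart : colRank M a (a + m) ≤ m - 1) :
    ∃ Γ : List (ℕ × ℕ), Γ.head?.map Prod.fst = some a ∧
      Γ.getLast?.map Prod.snd = some (n + 1) ∧
      (∀ p ∈ Γ, p.1 + m ≤ p.2 ∧ colRank M p.1 p.2 ≤ m - 1) ∧
      Γ.IsChain fun p q => PrimeSeqAdjacent m p q ∧ colRank M q.1 p.2 ≤ p.2 - q.1 := by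
  set b := Nat.findGreatest (fun b => colRank M a b ≤ m - 1) (n + 1)
  have hab : a + m ≤ b := Nat.le_findGreatest ha hstart
  have hb : colRank M a b ≤ m - 1 :=
    Nat.findGreatest_spec (P := fun b => colRank M a b ≤ m - 1) ha hstart
  rcases Nat.lt_or_ge b n with hbn | hbn
  · have hb' : m - 1 < colRank M a (b + 1) :=
      not_le.mp <| Nat.findGreatest_is_greatest (P := fun b => colRank M a b ≤ m - 1)
        (by omega : b < b + 1) (by omega)
    obtain ⟨a', haa', ha'b, hba', ha'n, hover, hstart'⟩ :=
      exists_next_interval_start hm hM hab hbn hb hb'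
    obtain ⟨Δ, hhead, hlast, hgood, hchain⟩ := exists_primeSeq_tail hm hM ha'n hstart'
    rcases Δ with _ | ⟨q, Δ'⟩
    · simp at hhead
    simp only [List.head?_cons, Option.map_some, Option.some.injEq] at hhead
    have hq := (hgood q List.mem_cons_self).1
    refine ⟨(a, b) :: q :: Δ', rfl, by simpa using hlast, ?_, ?_⟩
    · simpa [hab, hb] using hgood
    · exact List.IsChain.cons_cons
        ⟨⟨by omega, by omega, by omega, by omega⟩, by simpa [hhead]⟩ hchain
  · refine ⟨[(a, n + 1)], rfl, rfl, ?_, List.isChain_singleton _⟩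
    have := colRank_mono (M := M) (le_refl a) hbn
    rw [List.forall_mem_singleton,
      colRank_congr (a' := a) (b' := n) fun j => by have := j.2; omega]
    omega
termination_by n + 1 - a

end colRank

/-- if all adjacent maximal minors of a matrix `M` vanish, then there is
a prime sequence `Γ` such that the submatrix of `M` on each interval of `Γ` has rank
at most `m - 1` and the submatrix on each overlap `[a_{i+1}, b_i]` of consecutive
intervals has rank at most `b_i - a_{i+1}`. -/
theorem exists_primeSeq_of_adjacent_minors_vanish
    (K : Type*) [Field K] (m n : ℕ) (hm : 2 ≤ m) (hmn : m ≤ n)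
    (M : Matrix (Fin m) (Fin n) K)
    (hM : ∀ (c : ℕ) (hc : c + m ≤ n),
      (Matrix.of fun i j : Fin m =>
        M i (⟨c + j.1, by have := j.2; omega⟩ : Fin n)).det = 0) :
    ∃ Γ : List (ℕ × ℕ), IsPrimeSeq m n Γ ∧
      (∀ i, i < Γ.length → (colSubmatrix M Γ[i]!.1 Γ[i]!.2).rank ≤ m - 1) ∧
      (∀ i, i + 1 < Γ.length →
        (colSubmatrix M Γ[i + 1]!.1 Γ[i]!.2).rank ≤ Γ[i]!.2 - Γ[i + 1]!.1) := by
  have hstart : colRank M 0 (0 + m) ≤ m - 1 := by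
    rw [colRank_congr (a' := 1) (b' := m) fun j => by omega]
    simpa using AdjacentMaxMinorsVanish.colRank_le hM (c := 0) (by omega)
  obtain ⟨Γ, hhead, hlast, hgood, hchain⟩ := exists_primeSeq_tail hm hM (by omega) hstart
  refine ⟨Γ, isPrimeSeq_of_isChain hhead hlast (fun p hp => (hgood p hp).1)
    (hchain.imp fun _ _ h => h.1), fun i hi => ?_, fun i hi => ?_⟩
  · rw [getElem!_pos Γ i hi]
    exact (hgood _ (List.getElem_mem hi)).2
  · rw [getElem!_pos Γ i (by omega), getElem!_pos Γ (i + 1) hi]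
    exact (hchain.getElem i hi).2
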